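/- Let p ≥ 1 and 0 < ε < 1/2. Let V = [[M, X₀],[N, Y₀]] ∈ ℝ^{2p×2p} be orthogonal with p×p blocks satisfying ‖M − I_p‖₂ < ε, ‖N‖₂ < ε, ‖X₀‖₂ < ε, and ‖Y₀ − I_p‖₂ < ε². Then ‖V − I_{2p}‖₂ < 2ε, and every skew-symmetric L ∈ ℝ^{2p×2p} with exp_m(L) = V and ‖L‖₂ ≤ π satisfies ‖L‖₂ < 2ε·√(1 − ε²)/(1 − 2ε²). -/

import Mathlib

/-!
Cauchy–Schwarz bounds the spectral norm of a 2 × 2 block matrix by the root sum of squares of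
the norms of its blocks, so `‖V - 1‖₂² < 3ε² + ε⁴ < 4ε²`.

For the logarithm let `θ = ‖L‖₂` and let `v` be a unit vector with `‖L v‖ = θ`. Skew-symmetry
forces `L² v = -θ² v`, so `L` acts on `span {v, L v}` as a rotation by the angle `θ` and
`‖(V - 1) v‖² = 2 - 2 cos θ`. Hence `cos θ > 1 - 2ε² = cos (2 arcsin ε)`, so `θ < 2 arcsin ε`
because `θ ≤ π`, and `2 arcsin ε < tan (2 arcsin ε)`, which is the stated bound.
-/

open Matrix

/-- Spectral norm (largest singular value) of a real matrix: the operator norm of the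
induced linear map between Euclidean spaces. -/
noncomputable def sNorm {m n : Type*} [Fintype m] [Fintype n] [DecidableEq n]
    (A : Matrix m n ℝ) : ℝ :=
  ‖(Matrix.toEuclideanLin A).toContinuousLinearMap‖

open WithLp

lemma fromBlocks_sub_one {m n α : Type*} [DecidableEq m] [DecidableEq n] [Ring α]
    (A : Matrix m m α) (B : Matrix m n α) (C : Matrix n m α) (D : Matrix n n α) :
    fromBlocks A B C D - 1 = fromBlocks (A - 1) B C (D - 1) := by
  rw [← fromBlocks_one, sub_eq_add_neg, fromBlocks_neg, fromBlocks_add]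
  simp [sub_eq_add_neg]

section Blocks
variable {m n : Type*} [Fintype m] [Fintype n]

lemma norm_toLp_sumElim_sq (y : m → ℝ) (z : n → ℝ) :
    ‖toLp 2 (Sum.elim y z)‖ ^ 2 = ‖toLp 2 y‖ ^ 2 + ‖toLp 2 z‖ ^ 2 := by
  simp [EuclideanSpace.norm_sq_eq, Fintype.sum_sum_type]

variable [DecidableEq n]

lemma sNorm_nonneg (A : Matrix m n ℝ) : 0 ≤ sNorm A := norm_nonneg _

lemma norm_toLp_mulVec_le (A : Matrix m n ℝ) (x : n → ℝ) :
    ‖toLp 2 (A *ᵥ x)‖ ≤ sNorm A * ‖toLp 2 x‖ :=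
  (Matrix.toEuclideanLin A).toContinuousLinearMap.le_opNorm (toLp 2 x)

variable [DecidableEq m]

lemma norm_toLp_mulVec_add_mulVec_le {l : Type*} [Fintype l] (P : Matrix l m ℝ)
    (Q : Matrix l n ℝ) (u : m → ℝ) (w : n → ℝ) :
    ‖toLp 2 (P *ᵥ u + Q *ᵥ w)‖ ≤ sNorm P * ‖toLp 2 u‖ + sNorm Q * ‖toLp 2 w‖ := by
  rw [toLp_add]
  exact (norm_add_le _ _).trans (add_le_add (norm_toLp_mulVec_le P u) (norm_toLp_mulVec_le Q w))

lemma sNorm_fromBlocks_sq_le (A : Matrix m m ℝ) (B : Matrix m n ℝ) (C : Matrix n m ℝ)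
    (D : Matrix n n ℝ) :
    sNorm (fromBlocks A B C D) ^ 2 ≤ sNorm A ^ 2 + sNorm B ^ 2 + sNorm C ^ 2 + sNorm D ^ 2 := by
  have hS : 0 ≤ sNorm A ^ 2 + sNorm B ^ 2 + sNorm C ^ 2 + sNorm D ^ 2 := by positivity
  rw [← Real.le_sqrt (sNorm_nonneg _) hS]
  refine ContinuousLinearMap.opNorm_le_bound _ (Real.sqrt_nonneg _) fun x => ?_
  set u := ofLp x ∘ Sum.inl
  set w := ofLp x ∘ Sum.inr
  have hx : x = toLp 2 (Sum.elim u w) := by simp [u, w]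
  have hAB := norm_toLp_mulVec_add_mulVec_le A B u w
  have hCD := norm_toLp_mulVec_add_mulVec_le C D u w
  change ‖toLp 2 (fromBlocks A B C D *ᵥ ofLp x)‖ ≤ _
  rw [← pow_le_pow_iff_left₀ (norm_nonneg _) (by positivity) two_ne_zero, mul_pow,
    Real.sq_sqrt hS, hx, ofLp_toLp, fromBlocks_mulVec, Sum.elim_comp_inl, Sum.elim_comp_inr,
    norm_toLp_sumElim_sq, norm_toLp_sumElim_sq]
  have hAB2 := pow_le_pow_left₀ (norm_nonneg _) hAB 2
  have hCD2 := pow_le_pow_left₀ (norm_nonneg _) hCD 2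
  nlinarith [sq_nonneg (sNorm A * ‖toLp 2 w‖ - sNorm B * ‖toLp 2 u‖),
    sq_nonneg (sNorm C * ‖toLp 2 w‖ - sNorm D * ‖toLp 2 u‖)]

end Blocks

open scoped RealInnerProductSpace

namespace ContinuousLinearMap
variable {E F : Type*} [NormedAddCommGroup E] [InnerProductSpace ℝ E]
  [NormedAddCommGroup F] [NormedSpace ℝ F]

lemma exists_norm_eq_one_and_norm_apply_eq_opNorm [FiniteDimensional ℝ E] [Nontrivial E]
    (T : E →L[ℝ] F) : ∃ v, ‖v‖ = 1 ∧ ‖T v‖ = ‖T‖ := by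
  have hcompact : IsCompact ((fun x => ‖T x‖) '' Metric.sphere 0 1) :=
    (isCompact_sphere 0 1).image (by fun_prop)
  obtain ⟨v, hv, hTv⟩ := T.sSup_sphere_eq_norm ▸
    hcompact.sSup_mem ((NormedSpace.sphere_nonempty.mpr zero_le_one).image _)
  exact ⟨v, mem_sphere_zero_iff_norm.mp hv, hTv⟩

variable {T : E →L[ℝ] E}

lemma pow_apply_of_apply_eq_smul {v : E} {c : ℝ} (hv : T v = c • v) (k : ℕ) :
    (T ^ k) v = c ^ k • v := by
  induction k with
  | zero => simp
  | succ k ih => rw [pow_succ, mul_apply_eq_comp, hv, map_smul, ih, smul_smul, pow_succ']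

variable [CompleteSpace E]

lemma apply_apply_eq_neg_sq_opNorm_smul (hT : adjoint T = -T) {v : E}
    (hv : ‖T v‖ = ‖T‖ * ‖v‖) : T (T v) = -(‖T‖ ^ 2) • v := by
  have hinner : ⟪T (T v), v⟫ = -(‖T‖ * ‖v‖) ^ 2 := by
    have hTT : T (T v) = -adjoint T (T v) := by simp [hT]
    rw [← hv, ← real_inner_self_eq_norm_sq, hTT, inner_neg_left, adjoint_inner_left]
  have hle : ‖T (T v)‖ ≤ ‖T‖ ^ 2 * ‖v‖ := by
    calc ‖T (T v)‖ ≤ ‖T‖ * ‖T v‖ := T.le_opNorm _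
      _ = ‖T‖ ^ 2 * ‖v‖ := by rw [hv]; ring
  rw [neg_smul, ← sub_eq_zero, sub_neg_eq_add, ← norm_eq_zero, ← sq_eq_zero_iff]
  refine le_antisymm ?_ (sq_nonneg _)
  rw [norm_add_sq_real, inner_smul_right, hinner, norm_smul, Real.norm_of_nonneg (by positivity)]
  nlinarith [norm_nonneg (T (T v))]

lemma exp_apply_of_apply_apply_eq {θ : ℝ} (hθ : θ ≠ 0) {v : E}
    (hv : T (T v) = -(θ ^ 2) • v) :
    NormedSpace.exp T v = Real.cos θ • v + (Real.sin θ / θ) • T v := by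
  have hv2 : (T ^ 2) v = -(θ ^ 2) • v := by rw [sq, mul_apply_eq_comp, hv]
  have hseries := (NormedSpace.exp_series_hasSum_exp' (𝕂 := ℝ) T).mapL (apply ℝ E v)
  refine hseries.unique (HasSum.even_add_odd ?_ ?_)
  · convert (Real.hasSum_cos θ).smul_const v using 2 with k
    rw [apply_apply, _root_.smul_apply, pow_mul, pow_apply_of_apply_eq_smul hv2, smul_smul,
      neg_pow, ← pow_mul]
    congr 1
    field_simp
  · convert ((Real.hasSum_sin θ).div_const θ).smul_const (T v) using 2 with k
    rw [apply_apply, _root_.smul_apply, pow_succ', mul_apply_eq_comp, pow_mul,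
      pow_apply_of_apply_eq_smul hv2, map_smul, smul_smul, neg_pow, ← pow_mul]
    congr 1
    field_simp
    ring

lemma inner_map_self_eq_zero_of_adjoint_eq_neg (hT : adjoint T = -T) (v : E) :
    ⟪v, T v⟫ = 0 := by
  have h : ⟪v, T v⟫ = -⟪v, T v⟫ := by
    conv_lhs => rw [← adjoint_inner_left, hT, _root_.neg_apply, inner_neg_left, real_inner_comm]
  linarith

lemma two_sub_two_mul_cos_opNorm_le_sq_opNorm_exp_sub_one [FiniteDimensional ℝ E]
    (hT : adjoint T = -T) : 2 - 2 * Real.cos ‖T‖ ≤ ‖NormedSpace.exp T - 1‖ ^ 2 := by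
  set θ := ‖T‖
  rcases eq_or_ne θ 0 with hθ | hθ
  · simp [hθ]
  have : Nontrivial E := by
    refine (subsingleton_or_nontrivial E).resolve_left fun _ => hθ ?_
    simp [θ]
  obtain ⟨v, hv, hTv⟩ := T.exists_norm_eq_one_and_norm_apply_eq_opNorm
  have hTTv := apply_apply_eq_neg_sq_opNorm_smul hT (v := v) (by rw [hTv, hv, mul_one])
  have hexp : (NormedSpace.exp T - 1) v = (Real.cos θ - 1) • v + (Real.sin θ / θ) • T v := by
    rw [_root_.sub_apply, one_apply_eq_self, exp_apply_of_apply_apply_eq hθ hTTv, sub_smul,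
      one_smul]
    abel
  have hnorm : ‖(NormedSpace.exp T - 1) v‖ ^ 2 = 2 - 2 * Real.cos θ := by
    rw [hexp, norm_add_sq_real, real_inner_smul_left, real_inner_smul_right,
      inner_map_self_eq_zero_of_adjoint_eq_neg hT, norm_smul, norm_smul, hv, hTv, Real.norm_eq_abs,
      Real.norm_eq_abs, mul_pow, mul_pow, sq_abs, sq_abs, div_pow]
    field_simp
    nlinarith [Real.sin_sq_add_cos_sq θ]
  calc 2 - 2 * Real.cos θ = ‖(NormedSpace.exp T - 1) v‖ ^ 2 := hnorm.symm
    _ ≤ ‖NormedSpace.exp T - 1‖ ^ 2 := by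
      gcongr
      simpa [hv] using (NormedSpace.exp T - 1).le_opNorm v

end ContinuousLinearMap

section Matrix
variable {n : Type*} [Fintype n] [DecidableEq n]

lemma sNorm_eq_norm_toEuclideanCLM (A : Matrix n n ℝ) :
    sNorm A = ‖toEuclideanCLM (𝕜 := ℝ) A‖ := rfl

lemma toEuclideanCLM_exp (A : Matrix n n ℝ) :
    toEuclideanCLM (𝕜 := ℝ) (NormedSpace.exp A) =
      NormedSpace.exp (toEuclideanCLM (𝕜 := ℝ) A) := by
  -- `exp` depends only on the topology, and the L² operator norm induces the product topology.
  open scoped Matrix.Norms.L2Operator in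
  exact NormedSpace.map_exp_of_mem_ball (𝕂 := ℝ) (toEuclideanCLM (𝕜 := ℝ) (n := n))
    (LinearMap.continuous_of_finiteDimensional
      (toEuclideanCLM (𝕜 := ℝ) (n := n)).toAlgEquiv.toLinearMap) A
    ((NormedSpace.expSeries_radius_eq_top ℝ (Matrix n n ℝ)).symm ▸ edist_lt_top _ _)

lemma adjoint_toEuclideanCLM_of_transpose_eq_neg {L : Matrix n n ℝ} (hL : Lᵀ = -L) :
    (toEuclideanCLM (𝕜 := ℝ) L).adjoint = -toEuclideanCLM (𝕜 := ℝ) L := by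
  rw [← ContinuousLinearMap.star_eq_adjoint, ← map_star, star_eq_conjTranspose,
    conjTranspose_eq_transpose_of_trivial, hL, map_neg]

lemma two_sub_two_mul_cos_sNorm_le_sq_sNorm_exp_sub_one {L : Matrix n n ℝ} (hL : Lᵀ = -L) :
    2 - 2 * Real.cos (sNorm L) ≤ sNorm (NormedSpace.exp L - 1) ^ 2 := by
  rw [sNorm_eq_norm_toEuclideanCLM, sNorm_eq_norm_toEuclideanCLM, map_sub, map_one,
    toEuclideanCLM_exp]
  exact ContinuousLinearMap.two_sub_two_mul_cos_opNorm_le_sq_opNorm_exp_sub_one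
    (adjoint_toEuclideanCLM_of_transpose_eq_neg hL)

end Matrix

open Real

lemma Real.cos_two_mul_arcsin {x : ℝ} (hx₁ : -1 ≤ x) (hx₂ : x ≤ 1) :
    cos (2 * arcsin x) = 1 - 2 * x ^ 2 := by
  rw [cos_two_mul, cos_arcsin, sq_sqrt (by nlinarith)]
  ring

lemma Real.tan_two_mul_arcsin {x : ℝ} (hx₁ : -1 ≤ x) (hx₂ : x ≤ 1) :
    tan (2 * arcsin x) = 2 * x * √(1 - x ^ 2) / (1 - 2 * x ^ 2) := by
  rw [tan_eq_sin_div_cos, cos_two_mul_arcsin hx₁ hx₂, sin_two_mul, sin_arcsin hx₁ hx₂,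
    cos_arcsin]

lemma lt_of_one_sub_two_mul_sq_lt_cos {ε θ : ℝ} (hε : 0 < ε) (hε₂ : 2 * ε ^ 2 < 1)
    (hθ : θ ≤ π) (hcos : 1 - 2 * ε ^ 2 < cos θ) :
    θ < 2 * ε * √(1 - ε ^ 2) / (1 - 2 * ε ^ 2) := by
  have hε₁ : ε ≤ 1 := by nlinarith
  set φ := 2 * arcsin ε
  have hcosφ : cos φ = 1 - 2 * ε ^ 2 := cos_two_mul_arcsin (by linarith) hε₁
  have hφ_pos : 0 < φ := by have := arcsin_pos.mpr hε; positivity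
  have hθφ : θ < φ := by
    by_contra! h
    linarith [cos_le_cos_of_nonneg_of_le_pi hφ_pos.le hθ h]
  have hφ_lt : φ < π / 2 := by
    by_contra! h
    have := cos_nonpos_of_pi_div_two_le_of_le h (by linarith [arcsin_le_pi_div_two ε])
    linarith
  calc θ < φ := hθφ
    _ < tan φ := lt_tan hφ_pos hφ_lt
    _ = _ := tan_two_mul_arcsin (by linarith) hε₁

theorem stmt_8_general (p : ℕ) (ε : ℝ) (hε : 0 < ε) (hεhalf : ε < 1 / 2)
    (M X₀ N Y₀ : Matrix (Fin p) (Fin p) ℝ)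
    (V : Matrix (Fin p ⊕ Fin p) (Fin p ⊕ Fin p) ℝ)
    (hVdef : V = Matrix.fromBlocks M X₀ N Y₀)
    (hM : sNorm (M - 1) < ε) (hN : sNorm N < ε) (hX : sNorm X₀ < ε)
    (hY : sNorm (Y₀ - 1) < ε ^ 2) :
    sNorm (V - 1) < 2 * ε ∧
    ∀ L : Matrix (Fin p ⊕ Fin p) (Fin p ⊕ Fin p) ℝ, Lᵀ = -L →
      NormedSpace.exp L = V → sNorm L ≤ Real.pi →
      sNorm L < 2 * ε * Real.sqrt (1 - ε ^ 2) / (1 - 2 * ε ^ 2) := by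
  have hV : sNorm (V - 1) < 2 * ε := by
    have hsq := sNorm_fromBlocks_sq_le (M - 1) X₀ N (Y₀ - 1)
    rw [← fromBlocks_sub_one, ← hVdef] at hsq
    refine lt_of_pow_lt_pow_left₀ 2 (by positivity) (hsq.trans_lt ?_)
    have hε₄ : (ε ^ 2) ^ 2 < ε ^ 2 := by
      have hε₂ : ε ^ 2 < 1 := by nlinarith
      nlinarith [pow_pos hε 2]
    linarith [pow_lt_pow_left₀ hM (sNorm_nonneg _) two_ne_zero,
      pow_lt_pow_left₀ hX (sNorm_nonneg _) two_ne_zero,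
      pow_lt_pow_left₀ hN (sNorm_nonneg _) two_ne_zero,
      pow_lt_pow_left₀ hY (sNorm_nonneg _) two_ne_zero]
  refine ⟨hV, fun L hL hexp hLπ => lt_of_one_sub_two_mul_sq_lt_cos hε (by nlinarith) hLπ ?_⟩
  have hcos := two_sub_two_mul_cos_sNorm_le_sq_sNorm_exp_sub_one hL
  rw [hexp] at hcos
  nlinarith [sNorm_nonneg (V - 1)]

/-- starting-iterate bound: if the orthogonal block matrix
`V = [[M,X₀],[N,Y₀]]` satisfies `‖M−I‖₂ < ε`, `‖N‖₂ < ε`, `‖X₀‖₂ < ε`, `‖Y₀−I‖₂ < ε²`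
with `0 < ε < 1/2`, then `‖V − I‖₂ < 2ε` and every principal matrix logarithm `L` of `V`
(skew-symmetric, `exp_m(L) = V`, `‖L‖₂ ≤ π`) satisfies `‖L‖₂ < 2ε√(1−ε²)/(1−2ε²)`. -/
theorem stmt_8 (p : ℕ) (hp : 1 ≤ p) (ε : ℝ) (hε : 0 < ε) (hεhalf : ε < 1 / 2)
    (M X₀ N Y₀ : Matrix (Fin p) (Fin p) ℝ)
    (V : Matrix (Fin p ⊕ Fin p) (Fin p ⊕ Fin p) ℝ)
    (hVdef : V = Matrix.fromBlocks M X₀ N Y₀)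
    (horth : Vᵀ * V = 1 ∧ V * Vᵀ = 1)
    (hM : sNorm (M - 1) < ε) (hN : sNorm N < ε) (hX : sNorm X₀ < ε)
    (hY : sNorm (Y₀ - 1) < ε ^ 2) :
    sNorm (V - 1) < 2 * ε ∧
    ∀ L : Matrix (Fin p ⊕ Fin p) (Fin p ⊕ Fin p) ℝ, Lᵀ = -L →
      NormedSpace.exp L = V → sNorm L ≤ Real.pi →
      sNorm L < 2 * ε * Real.sqrt (1 - ε ^ 2) / (1 - 2 * ε ^ 2) :=
  stmt_8_general p ε hε hεhalf M X₀ N Y₀ V hVdef hM hN hX hY
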